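/- arXiv:2412.13620 — 2 statements merged into one kernel-verified Lean document; each statement's English description precedes it below -/
import Mathlib

section
/- Let ε > 1 be real, q > 0 real, and s ∈ ℂ with Re s > 0. Then ∑_{n≥1} q^{s/2}·(ε^{2n−1} + ε^{1−2n})^{−s} = q^{s/2} · ∑_{k≥0} C(−s,k) · ε^{s+2k}/(ε^{2s+4k} − 1), where both sides converge absolutely. -/
/-!
Expand each term by the binomial series: writing `t = ε ^ (2n+1)`,
`(t + t⁻¹) ^ (-s) = t ^ (-s) (1 + t⁻²) ^ (-s) = ∑ₖ C(-s,k) t ^ (-s-2k)`.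
This yields the double series `∑ₙ ∑ₖ C(-s,k) ε ^ (-(2n+1)(s+2k))`, which converges absolutely
because `C(-s,k)` grows at most polynomially and both exponents decay geometrically.
Summing first over `n` instead gives the geometric series `∑ₙ w ^ (2n+1) = w / (1 - w²)`
with `w = ε ^ (-(s+2k))`, which is the `k`-th term on the right.
-/

open Complex

/-- Generalized binomial coefficient C(s, k) = s(s-1)⋯(s-k+1)/k!. -/
noncomputable def genBinom (s : ℂ) (k : ℕ) : ℂ :=
  (∏ i ∈ Finset.range k, (s - i)) / (Nat.factorial k)

theorem genBinom_eq_choose (a : ℂ) (k : ℕ) : genBinom a k = Ring.choose a k := by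
  rw [Ring.choose_eq_smul, ← Polynomial.aeval_eq_smeval, Polynomial.aeval_def,
    Polynomial.eval₂_eq_eval_map, descPochhammer_map, descPochhammer_eval_eq_prod_range,
    genBinom, smul_eq_mul, div_eq_inv_mul]

theorem summable_norm_genBinom_mul_pow (a : ℂ) {r : ℝ} (hr0 : 0 ≤ r) (hr : r < 1) :
    Summable (fun k => ‖genBinom a k‖ * r ^ k) := by
  have hr' : (r.toNNReal : ENNReal) < (binomialSeries ℂ a).radius :=
    lt_of_lt_of_le (by simpa using hr) binomialSeries_radius_ge_one
  have := (binomialSeries ℂ a).summable_norm_mul_pow hr'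
  simpa only [binomialSeries, FormalMultilinearSeries.ofScalars_norm, Real.coe_toNNReal _ hr0,
    genBinom_eq_choose] using this

theorem hasSum_genBinom_mul_pow (a : ℂ) {x : ℂ} (hx : ‖x‖ < 1) :
    HasSum (fun k => genBinom a k * x ^ k) ((1 + x) ^ a) := by
  have hx' : x ∈ Metric.eball (0 : ℂ) 1 := by
    rw [Metric.mem_eball, edist_zero_right, ← ofReal_norm, ← ENNReal.ofReal_one]
    exact (ENNReal.ofReal_lt_ofReal_iff one_pos).2 hx
  simpa [binomialSeries, FormalMultilinearSeries.ofScalars_apply_eq, genBinom_eq_choose, mul_comm]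
    using Complex.one_add_cpow_hasFPowerSeriesOnBall_zero.hasSum hx'

theorem hasSum_pow_two_mul_add_one {K : Type*} [NormedDivisionRing K] {w : K} (hw : ‖w‖ < 1) :
    HasSum (fun n : ℕ => w ^ (2 * n + 1)) (w * (1 - w ^ 2)⁻¹) := by
  have hw2 : ‖w ^ 2‖ < 1 := by
    rw [norm_pow]; exact pow_lt_one₀ (norm_nonneg w) hw two_ne_zero
  simpa [pow_succ', pow_mul] using (hasSum_geometric_of_norm_lt_one hw2).mul_left w

theorem summable_norm_of_hasSum_of_summable_norm_prod {ι κ E : Type*} [NormedAddCommGroup E]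
    {f : ι → κ → E} {a : ι → E} (hf : Summable fun p : ι × κ => ‖f p.1 p.2‖)
    (ha : ∀ i, HasSum (f i) (a i)) : Summable fun i => ‖a i‖ := by
  obtain ⟨hrow, hsum⟩ := (summable_prod_of_nonneg fun _ => norm_nonneg _).1 hf
  refine hsum.of_nonneg_of_le (fun _ => norm_nonneg _) fun i => ?_
  rw [← (ha i).tsum_eq]
  exact norm_tsum_le_tsum_norm (hrow i)

namespace Complex

theorem ofReal_pow_cpow {x : ℝ} (hx : 0 ≤ x) (m : ℕ) (z : ℂ) :
    ((x ^ m : ℝ) : ℂ) ^ z = ((x : ℂ) ^ z) ^ m := by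
  rw [← cpow_nat_mul, ← Real.rpow_natCast, ← cpow_mul_ofReal_nonneg hx, ofReal_natCast]

theorem ofReal_cpow_sub_two_mul {t : ℝ} (ht : 0 < t) (a : ℂ) (k : ℕ) :
    (t : ℂ) ^ (a - 2 * k) = (t : ℂ) ^ a * ((t⁻¹ ^ 2 : ℝ) : ℂ) ^ k := by
  have htC : (t : ℂ) ≠ 0 := ofReal_ne_zero.2 ht.ne'
  rw [cpow_sub _ _ htC, show (2 * k : ℂ) = ((2 * k : ℕ) : ℂ) by push_cast; ring, cpow_natCast]
  push_cast
  rw [div_eq_mul_inv, ← pow_mul, inv_pow]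

end Complex

theorem hasSum_genBinom_mul_cpow_sub_two_mul {t : ℝ} (ht : 1 < t) (a : ℂ) :
    HasSum (fun k : ℕ => genBinom a k * (t : ℂ) ^ (a - 2 * k)) (((t + t⁻¹ : ℝ) : ℂ) ^ a) := by
  have ht0 : 0 < t := one_pos.trans ht
  have hx : ‖((t⁻¹ ^ 2 : ℝ) : ℂ)‖ < 1 := by
    rw [norm_real, Real.norm_of_nonneg (by positivity)]
    exact pow_lt_one₀ (by positivity) (inv_lt_one_of_one_lt₀ ht) two_ne_zero
  have hsplit : t + t⁻¹ = t * (1 + t⁻¹ ^ 2) := by field_simp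
  rw [hsplit, ofReal_mul, mul_cpow_ofReal_nonneg ht0.le (by positivity), ofReal_add, ofReal_one]
  simpa only [ofReal_cpow_sub_two_mul ht0, mul_left_comm] using
    (hasSum_genBinom_mul_pow a hx).mul_left ((t : ℂ) ^ a)

theorem hasSum_cpow_neg_pow_two_mul_add_one {ε : ℝ} (hε : 1 < ε) {z : ℂ} (hz : 0 < z.re) :
    HasSum (fun n : ℕ => ((ε ^ (2 * n + 1) : ℝ) : ℂ) ^ (-z))
      ((ε : ℂ) ^ z / ((ε : ℂ) ^ (2 * z) - 1)) := by
  have hε0 : 0 < ε := one_pos.trans hε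
  set v := (ε : ℂ) ^ z
  have hv : 1 < ‖v‖ := by
    rw [norm_cpow_eq_rpow_re_of_pos hε0]
    exact Real.one_lt_rpow hε hz
  have hv0 : v ≠ 0 := norm_pos_iff.1 (one_pos.trans hv)
  have hv2 : v ^ 2 - 1 ≠ 0 := by
    intro h
    have : ‖v‖ ^ 2 = 1 := by rw [← norm_pow, sub_eq_zero.1 h, norm_one]
    nlinarith
  have hw : ‖v⁻¹‖ < 1 := by rw [norm_inv]; exact inv_lt_one_of_one_lt₀ hv
  have h2z : (ε : ℂ) ^ (2 * z) = v ^ 2 := by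
    rw [show (2 * z : ℂ) = ((2 : ℕ) : ℂ) * z by norm_num, cpow_nat_mul]
  rw [h2z, show v / (v ^ 2 - 1) = v⁻¹ * (1 - v⁻¹ ^ 2)⁻¹ by field_simp]
  simpa only [ofReal_pow_cpow hε0.le, cpow_neg] using hasSum_pow_two_mul_add_one hw

noncomputable def oddBinomArray (ε : ℝ) (s : ℂ) (n k : ℕ) : ℂ :=
  genBinom (-s) k * ((ε ^ (2 * n + 1) : ℝ) : ℂ) ^ (-s - 2 * k)

theorem hasSum_oddBinomArray_row {ε : ℝ} (hε : 1 < ε) (s : ℂ) (n : ℕ) :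
    HasSum (oddBinomArray ε s n)
      (((ε ^ (2 * n + 1) + (ε ^ (2 * n + 1))⁻¹ : ℝ) : ℂ) ^ (-s)) :=
  hasSum_genBinom_mul_cpow_sub_two_mul (one_lt_pow₀ hε (by omega)) (-s)

theorem hasSum_oddBinomArray_col {ε : ℝ} (hε : 1 < ε) {s : ℂ} (hs : 0 < s.re) (k : ℕ) :
    HasSum (fun n => oddBinomArray ε s n k)
      (genBinom (-s) k * (ε : ℂ) ^ (s + 2 * (k : ℂ)) / ((ε : ℂ) ^ (2 * s + 4 * (k : ℂ)) - 1)) := by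
  have hre : 0 < (s + 2 * (k : ℂ)).re := by
    simp only [add_re, mul_re, re_ofNat, natCast_re, im_ofNat, natCast_im, mul_zero, sub_zero]
    positivity
  rw [mul_div_assoc, show 2 * s + 4 * (k : ℂ) = 2 * (s + 2 * k) by ring]
  simpa only [oddBinomArray, neg_add'] using
    (hasSum_cpow_neg_pow_two_mul_add_one hε hre).mul_left (genBinom (-s) k)

theorem summable_norm_oddBinomArray {ε : ℝ} (hε : 1 < ε) {s : ℂ} (hs : 0 < s.re) :
    Summable fun p : ℕ × ℕ => ‖oddBinomArray ε s p.1 p.2‖ := by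
  have hε0 : 0 < ε := one_pos.trans hε
  have hγ : ‖(ε : ℂ) ^ (-s)‖ < 1 := by
    rw [norm_cpow_eq_rpow_re_of_pos hε0, neg_re]
    exact Real.rpow_lt_one_of_one_lt_of_neg hε (neg_neg_of_pos hs)
  set γ := ‖(ε : ℂ) ^ (-s)‖
  have hr : ε⁻¹ ^ 2 < 1 := pow_lt_one₀ (by positivity) (inv_lt_one_of_one_lt₀ hε) two_ne_zero
  have hbound : ∀ n k : ℕ,
      ‖oddBinomArray ε s n k‖ ≤ γ ^ (2 * n + 1) * (‖genBinom (-s) k‖ * (ε⁻¹ ^ 2) ^ k) := by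
    intro n k
    have ht : ε ≤ ε ^ (2 * n + 1) := le_self_pow₀ hε.le (by omega)
    rw [oddBinomArray, ofReal_cpow_sub_two_mul (by positivity), ofReal_pow_cpow hε0.le,
      norm_mul, norm_mul, norm_pow, norm_pow, norm_real,
      Real.norm_of_nonneg (by positivity : (0 : ℝ) ≤ (ε ^ (2 * n + 1))⁻¹ ^ 2), mul_left_comm]
    gcongr
  refine Summable.of_nonneg_of_le (fun _ => norm_nonneg _) (fun p => hbound p.1 p.2) ?_
  exact (hasSum_pow_two_mul_add_one (by rwa [norm_norm])).summable.mul_of_nonneg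
    (summable_norm_genBinom_mul_pow (-s) (by positivity) hr) (fun _ => by positivity)
    (fun _ => by positivity)

theorem odd_fib_zeta_binomial_general (ε q : ℝ) (hε : 1 < ε)
    (s : ℂ) (hs : 0 < s.re) :
    Summable (fun n : ℕ =>
      ‖(q : ℂ) ^ (s / 2) *
        ((ε ^ (2 * ((n : ℤ) + 1) - 1) + ε ^ (1 - 2 * ((n : ℤ) + 1)) : ℝ) : ℂ) ^ (-s)‖) ∧
    Summable (fun k : ℕ =>
      ‖genBinom (-s) k * (ε : ℂ) ^ (s + 2 * (k : ℂ)) / ((ε : ℂ) ^ (2 * s + 4 * (k : ℂ)) - 1)‖) ∧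
    (∑' n : ℕ, (q : ℂ) ^ (s / 2) *
        ((ε ^ (2 * ((n : ℤ) + 1) - 1) + ε ^ (1 - 2 * ((n : ℤ) + 1)) : ℝ) : ℂ) ^ (-s)) =
      (q : ℂ) ^ (s / 2) *
        ∑' k : ℕ, genBinom (-s) k * (ε : ℂ) ^ (s + 2 * (k : ℂ)) /
          ((ε : ℂ) ^ (2 * s + 4 * (k : ℂ)) - 1) := by
  have hodd : ∀ n : ℕ, ε ^ (2 * ((n : ℤ) + 1) - 1) + ε ^ (1 - 2 * ((n : ℤ) + 1))
      = ε ^ (2 * n + 1) + (ε ^ (2 * n + 1))⁻¹ := fun n => by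
    rw [show 1 - 2 * ((n : ℤ) + 1) = -(2 * ((n : ℤ) + 1) - 1) by ring, zpow_neg,
      show 2 * ((n : ℤ) + 1) - 1 = ((2 * n + 1 : ℕ) : ℤ) by push_cast; ring, zpow_natCast]
  have hf := summable_norm_oddBinomArray hε hs
  have hf' : Summable fun p : ℕ × ℕ => ‖oddBinomArray ε s p.2 p.1‖ := hf.prod_symm
  have hrow := hasSum_oddBinomArray_row hε s
  have hcol := hasSum_oddBinomArray_col hε hs
  simp only [hodd]
  refine ⟨?_, summable_norm_of_hasSum_of_summable_norm_prod (f := fun k n => oddBinomArray ε s n k)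
    hf' hcol, ?_⟩
  · simp only [norm_mul]
    exact (summable_norm_of_hasSum_of_summable_norm_prod hf hrow).mul_left _
  rw [tsum_mul_left]
  congr 1
  calc _ = ∑' n, ∑' k, oddBinomArray ε s n k := tsum_congr fun n => (hrow n).tsum_eq.symm
    _ = ∑' k, ∑' n, oddBinomArray ε s n k :=
      (Summable.tsum_comm (f := oddBinomArray ε s) (Summable.of_norm hf)).symm
    _ = _ := tsum_congr fun k => (hcol k).tsum_eq

theorem odd_fib_zeta_binomial (ε q : ℝ) (hε : 1 < ε) (hq : 0 < q)
    (s : ℂ) (hs : 0 < s.re) :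
    Summable (fun n : ℕ =>
      ‖(q : ℂ) ^ (s / 2) *
        ((ε ^ (2 * ((n : ℤ) + 1) - 1) + ε ^ (1 - 2 * ((n : ℤ) + 1)) : ℝ) : ℂ) ^ (-s)‖) ∧
    Summable (fun k : ℕ =>
      ‖genBinom (-s) k * (ε : ℂ) ^ (s + 2 * (k : ℂ)) / ((ε : ℂ) ^ (2 * s + 4 * (k : ℂ)) - 1)‖) ∧
    (∑' n : ℕ, (q : ℂ) ^ (s / 2) *
        ((ε ^ (2 * ((n : ℤ) + 1) - 1) + ε ^ (1 - 2 * ((n : ℤ) + 1)) : ℝ) : ℂ) ^ (-s)) =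
      (q : ℂ) ^ (s / 2) *
        ∑' k : ℕ, genBinom (-s) k * (ε : ℂ) ^ (s + 2 * (k : ℂ)) /
          ((ε : ℂ) ^ (2 * s + 4 * (k : ℂ)) - 1) :=
  odd_fib_zeta_binomial_general ε q hε s hs
end

section
/- For Re s > 0 and any real m, the Fourier transform of f(x) = (ε^x + ε^{−x})^{−s} satisfies ∫_{−∞}^{∞} (ε^x + ε^{−x})^{−s} e^{−2πimx} dx = Γ(s/2 + πim/log ε)·Γ(s/2 − πim/log ε)/(2·Γ(s)·log ε), where ε > 1 is real. -/
/-!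
With `L = log ε` we have `ε ^ x + ε ^ (-x) = 2 cosh (L x)`, so the substitution `y = L x` turns
the integral into `L⁻¹ ∫ exp ((u - v) y) (2 cosh y) ^ (-(u + v)) dy` with
`u, v = s / 2 ∓ π i m / L`. For the logistic function `σ` one has
`σ (±2y) = exp (±y) / (2 cosh y)`, so this integrand is `σ (2y) ^ u σ (-2y) ^ v`, and the
substitution `t = σ (2y)`, which maps `ℝ` onto `(0, 1)` with `dt = 2 σ (2y) σ (-2y) dy`,
identifies the integral with `B (u, v) / 2 = Γ (u) Γ (v) / (2 Γ (u + v))`.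
-/

open Complex Real

open MeasureTheory Set

lemma Complex.ofReal_cpow_eq_exp_mul_log {r : ℝ} (hr : 0 < r) (w : ℂ) :
    (r : ℂ) ^ w = Complex.exp (w * Real.log r) := by
  rw [cpow_def_of_ne_zero (by exact_mod_cast hr.ne'), ← ofReal_log hr.le, mul_comm]

lemma Complex.betaIntegral_eq_integral_sigmoid (u v : ℂ) :
    betaIntegral u v = ∫ x : ℝ, (sigmoid x : ℂ) ^ u * (sigmoid (-x) : ℂ) ^ v := by
  rw [betaIntegral, intervalIntegral.integral_of_le zero_le_one, integral_Ioc_eq_integral_Ioo,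
    ← range_sigmoid, ← image_univ,
    integral_image_eq_integral_abs_deriv_smul MeasurableSet.univ
      (fun x _ => (hasDerivAt_sigmoid x).hasDerivWithinAt) sigmoid_injective.injOn,
    setIntegral_univ]
  refine integral_congr_ae (Filter.Eventually.of_forall fun x => ?_)
  dsimp only
  have hσ : 0 < sigmoid x := sigmoid_pos x
  have hσ' : 0 < 1 - sigmoid x := sub_pos.mpr (sigmoid_lt_one x)
  have hσC : (sigmoid x : ℂ) ≠ 0 := by exact_mod_cast hσ.ne'
  have hσC' : (1 - sigmoid x : ℂ) ≠ 0 := by exact_mod_cast hσ'.ne'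
  rw [sigmoid_neg, abs_of_pos (mul_pos hσ hσ'), real_smul]
  push_cast
  rw [cpow_sub _ _ hσC, cpow_sub _ _ hσC', cpow_one, cpow_one]
  field_simp

lemma Real.sigmoid_two_mul (y : ℝ) : sigmoid (2 * y) = Real.exp y / (2 * Real.cosh y) := by
  have h : Real.exp y * Real.exp (-y) = 1 := by rw [← Real.exp_add, add_neg_cancel, Real.exp_zero]
  rw [sigmoid_def, cosh_eq, show -(2 * y) = -y + -y by ring, Real.exp_add]
  field_simp
  linear_combination (-Real.exp (-y)) * h

lemma Complex.sigmoid_two_mul_cpow_mul_sigmoid_neg_two_mul_cpow (u v : ℂ) (y : ℝ) :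
    (sigmoid (2 * y) : ℂ) ^ u * (sigmoid (-(2 * y)) : ℂ) ^ v =
      Complex.exp ((u - v) * y) * ((2 * Real.cosh y : ℝ) : ℂ) ^ (-(u + v)) := by
  have hc : 0 < 2 * Real.cosh y := by positivity
  rw [← mul_neg, sigmoid_two_mul, sigmoid_two_mul, Real.cosh_neg,
    ofReal_cpow_eq_exp_mul_log (by positivity), ofReal_cpow_eq_exp_mul_log (by positivity),
    ofReal_cpow_eq_exp_mul_log hc, ← Complex.exp_add, ← Complex.exp_add,
    Real.log_div (Real.exp_pos _).ne' hc.ne', Real.log_div (Real.exp_pos _).ne' hc.ne',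
    Real.log_exp, Real.log_exp]
  push_cast
  ring_nf

lemma integral_exp_mul_two_cosh_cpow {u v : ℂ} (hu : 0 < u.re) (hv : 0 < v.re) :
    ∫ y : ℝ, Complex.exp ((u - v) * y) * ((2 * Real.cosh y : ℝ) : ℂ) ^ (-(u + v)) =
      Gamma u * Gamma v / (2 * Gamma (u + v)) := by
  have h := Measure.integral_comp_mul_left
    (fun x : ℝ => (sigmoid x : ℂ) ^ u * (sigmoid (-x) : ℂ) ^ v) 2
  simp only [sigmoid_two_mul_cpow_mul_sigmoid_neg_two_mul_cpow,
    ← betaIntegral_eq_integral_sigmoid, betaIntegral_eq_Gamma_mul_div u v hu hv] at h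
  rw [h]
  norm_num
  field_simp

lemma Real.rpow_add_rpow_neg_eq_two_mul_cosh {ε : ℝ} (hε : 0 < ε) (x : ℝ) :
    ε ^ x + ε ^ (-x) = 2 * Real.cosh (Real.log ε * x) := by
  rw [Real.cosh_eq, rpow_def_of_pos hε, rpow_def_of_pos hε, mul_neg]
  ring

theorem fourier_transform_odd (ε : ℝ) (hε : 1 < ε) (s : ℂ) (hs : 0 < s.re)
    (m : ℝ) :
    (∫ x : ℝ, ((Real.rpow ε x + Real.rpow ε (-x) : ℝ) : ℂ) ^ (-s) *
        Complex.exp (-2 * Real.pi * Complex.I * m * x)) =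
      Complex.Gamma (s / 2 + Real.pi * Complex.I * m / Real.log ε) *
        Complex.Gamma (s / 2 - Real.pi * Complex.I * m / Real.log ε) /
          (2 * Complex.Gamma s * Real.log ε) := by
  set L := Real.log ε
  have hL : 0 < L := Real.log_pos hε
  set u := s / 2 - Real.pi * Complex.I * m / L
  set v := s / 2 + Real.pi * Complex.I * m / L
  have hre (c : ℝ) : 0 < (s / 2 + Real.pi * Complex.I * c / L).re := by
    simpa [Complex.div_re, Complex.normSq] using half_pos hs
  have hu : 0 < u.re := by simpa [u, sub_eq_add_neg, neg_div] using hre (-m)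
  have hv : 0 < v.re := hre m
  have hsum : u + v = s := by ring
  have hintegrand (x : ℝ) :
      ((Real.rpow ε x + Real.rpow ε (-x) : ℝ) : ℂ) ^ (-s) *
          Complex.exp (-2 * Real.pi * Complex.I * m * x) =
        Complex.exp ((u - v) * ↑(L * x)) * ((2 * Real.cosh (L * x) : ℝ) : ℂ) ^ (-(u + v)) := by
    have hdiff : (u - v) * ↑(L * x) = -2 * Real.pi * Complex.I * m * x := by
      have hLC : (L : ℂ) ≠ 0 := by exact_mod_cast hL.ne'
      simp only [u, v]
      field_simp
      push_cast
      ring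
    rw [hsum, hdiff, mul_comm, ← rpow_add_rpow_neg_eq_two_mul_cosh (by linarith) x]
    rfl
  simp_rw [hintegrand]
  rw [Measure.integral_comp_mul_left (fun y : ℝ => Complex.exp ((u - v) * y) *
      ((2 * Real.cosh y : ℝ) : ℂ) ^ (-(u + v))) L,
    integral_exp_mul_two_cosh_cpow hu hv, abs_of_pos (inv_pos.mpr hL), hsum, real_smul, ofReal_inv]
  ring
end
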